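/- arXiv:1606.03984 — 6 statements merged into one kernel-verified Lean document; each statement's English description precedes it below -/
import Mathlib

section
/- Compactness Theorem: for any set Γ ∪ {φ} of formulas of full propositional team logic (FPT), if Γ ⊨ φ (that is, every team X of valuations ℕ → {0,1} satisfying every formula of Γ also satisfies φ), then there exists a finite subset Γ₀ ⊆ Γ with Γ₀ ⊨ φ. -/
/-- Formulas of full propositional team logic (FPT), with propositional
variables indexed by a type `V`. -/
inductive PTForm (V : Type) : Type where
  | pos : V → PTForm V
  | neg : V → PTForm V
  | bot : PTForm V
  | ne : PTForm V
  | dep : List V → V → PTForm V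
  | indep : List V → List V → PTForm V
  | incl : List V → List V → PTForm V
  | and : PTForm V → PTForm V → PTForm V
  | tensor : PTForm V → PTForm V → PTForm V
  | nsor : PTForm V → PTForm V → PTForm V
  | bor : PTForm V → PTForm V → PTForm V

/-- Team semantics of full propositional team logic.  A valuation is a
function `V → Bool` and a team is a set of valuations. -/
def PTSat {V : Type} (X : Set (V → Bool)) : PTForm V → Prop
  | .pos i => ∀ s ∈ X, s i = true
  | .neg i => ∀ s ∈ X, s i = false
  | .bot => X = ∅
  | .ne => X ≠ ∅
  | .dep xs y => ∀ s ∈ X, ∀ s' ∈ X, (∀ i ∈ xs, s i = s' i) → s y = s' y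
  | .indep xs ys =>
      ∀ s ∈ X, ∀ s' ∈ X, ∃ s'' ∈ X,
        (∀ i ∈ xs, s'' i = s i) ∧ (∀ j ∈ ys, s'' j = s' j)
  | .incl xs ys => ∀ s ∈ X, ∃ s' ∈ X, ∀ p ∈ List.zip xs ys, s p.1 = s' p.2
  | .and φ ψ => PTSat X φ ∧ PTSat X ψ
  | .tensor φ ψ => ∃ Y Z, X = Y ∪ Z ∧ PTSat Y φ ∧ PTSat Z ψ
  | .nsor φ ψ =>
      X = ∅ ∨ ∃ Y Z, X = Y ∪ Z ∧ Y.Nonempty ∧ Z.Nonempty ∧ PTSat Y φ ∧ PTSat Z ψ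
  | .bor φ ψ => PTSat X φ ∨ PTSat X ψ

/-- The set of propositional variables occurring in a formula. -/
def PTForm.vars {V : Type} : PTForm V → Set V
  | .pos i => {i}
  | .neg i => {i}
  | .bot => ∅
  | .ne => ∅
  | .dep xs y => {i | i ∈ xs} ∪ {y}
  | .indep xs ys => {i | i ∈ xs} ∪ {j | j ∈ ys}
  | .incl xs ys => {i | i ∈ xs} ∪ {j | j ∈ ys}
  | .and φ ψ => φ.vars ∪ ψ.vars
  | .tensor φ ψ => φ.vars ∪ ψ.vars
  | .nsor φ ψ => φ.vars ∪ ψ.vars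
  | .bor φ ψ => φ.vars ∪ ψ.vars

/-- The formula does not contain the atom NE. -/
def PTForm.NEfree {V : Type} : PTForm V → Prop
  | .ne => False
  | .and φ ψ => φ.NEfree ∧ ψ.NEfree
  | .tensor φ ψ => φ.NEfree ∧ ψ.NEfree
  | .nsor φ ψ => φ.NEfree ∧ ψ.NEfree
  | .bor φ ψ => φ.NEfree ∧ ψ.NEfree
  | _ => True

/-- Classical formulas: built from `pᵢ`, `¬pᵢ`, `⊥` using only `∧` and `⊗`. -/
inductive IsClassical {V : Type} : PTForm V → Prop where
  | pos (i : V) : IsClassical (.pos i)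
  | neg (i : V) : IsClassical (.neg i)
  | bot : IsClassical .bot
  | and : ∀ {φ ψ}, IsClassical φ → IsClassical ψ → IsClassical (.and φ ψ)
  | tensor : ∀ {φ ψ}, IsClassical φ → IsClassical ψ → IsClassical (.tensor φ ψ)

/-- The language of strong propositional team logic PT⁺:
atoms `pᵢ`, `¬pᵢ`, `⊥`, `NE` and connectives `∧`, `⊗`, `∨`. -/
inductive IsPTPlus {V : Type} : PTForm V → Prop where
  | pos (i : V) : IsPTPlus (.pos i)
  | neg (i : V) : IsPTPlus (.neg i)
  | bot : IsPTPlus .bot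
  | ne : IsPTPlus .ne
  | and : ∀ {φ ψ}, IsPTPlus φ → IsPTPlus ψ → IsPTPlus (.and φ ψ)
  | tensor : ∀ {φ ψ}, IsPTPlus φ → IsPTPlus ψ → IsPTPlus (.tensor φ ψ)
  | bor : ∀ {φ ψ}, IsPTPlus φ → IsPTPlus ψ → IsPTPlus (.bor φ ψ)

/-- The language of propositional team logic PT:
atoms `pᵢ`, `¬pᵢ`, `⊥` and connectives `∧`, `⊛`, `∨`. -/
inductive IsPT {V : Type} : PTForm V → Prop where
  | pos (i : V) : IsPT (.pos i)
  | neg (i : V) : IsPT (.neg i)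
  | bot : IsPT .bot
  | and : ∀ {φ ψ}, IsPT φ → IsPT ψ → IsPT (.and φ ψ)
  | nsor : ∀ {φ ψ}, IsPT φ → IsPT ψ → IsPT (.nsor φ ψ)
  | bor : ∀ {φ ψ}, IsPT φ → IsPT ψ → IsPT (.bor φ ψ)

/-- The language of propositional union closed logic PU:
atoms `pᵢ`, `¬pᵢ`, `⊥` and connectives `∧`, `⊗`, `⊛`. -/
inductive IsPU {V : Type} : PTForm V → Prop where
  | pos (i : V) : IsPU (.pos i)
  | neg (i : V) : IsPU (.neg i)
  | bot : IsPU .bot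
  | and : ∀ {φ ψ}, IsPU φ → IsPU ψ → IsPU (.and φ ψ)
  | tensor : ∀ {φ ψ}, IsPU φ → IsPU ψ → IsPU (.tensor φ ψ)
  | nsor : ∀ {φ ψ}, IsPU φ → IsPU ψ → IsPU (.nsor φ ψ)

/-- The language of strong propositional union closed logic PU⁺:
atoms `pᵢ`, `¬pᵢ`, `⊥`, `NE` and connectives `∧`, `⊗`, `⊛`. -/
inductive IsPUPlus {V : Type} : PTForm V → Prop where
  | pos (i : V) : IsPUPlus (.pos i)
  | neg (i : V) : IsPUPlus (.neg i)
  | bot : IsPUPlus .bot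
  | ne : IsPUPlus .ne
  | and : ∀ {φ ψ}, IsPUPlus φ → IsPUPlus ψ → IsPUPlus (.and φ ψ)
  | tensor : ∀ {φ ψ}, IsPUPlus φ → IsPUPlus ψ → IsPUPlus (.tensor φ ψ)
  | nsor : ∀ {φ ψ}, IsPUPlus φ → IsPUPlus ψ → IsPUPlus (.nsor φ ψ)

/-- The atom-free team language: atoms `pᵢ`, `¬pᵢ`, `⊥`, `NE` and
connectives `∧`, `⊗`, `⊛`, `∨` (no dependence/independence/inclusion atoms). -/
inductive IsAtomFree {V : Type} : PTForm V → Prop where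
  | pos (i : V) : IsAtomFree (.pos i)
  | neg (i : V) : IsAtomFree (.neg i)
  | bot : IsAtomFree .bot
  | ne : IsAtomFree .ne
  | and : ∀ {φ ψ}, IsAtomFree φ → IsAtomFree ψ → IsAtomFree (.and φ ψ)
  | tensor : ∀ {φ ψ}, IsAtomFree φ → IsAtomFree ψ → IsAtomFree (.tensor φ ψ)
  | nsor : ∀ {φ ψ}, IsAtomFree φ → IsAtomFree ψ → IsAtomFree (.nsor φ ψ)
  | bor : ∀ {φ ψ}, IsAtomFree φ → IsAtomFree ψ → IsAtomFree (.bor φ ψ)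

/-- The literal `pᵢ^{s(i)}`, i.e. `pᵢ` if `s i = 1` and `¬pᵢ` if `s i = 0`. -/
def PTlit {V : Type} (s : V → Bool) (i : V) : PTForm V :=
  if s i then .pos i else .neg i

/-- Conjunction of a nonempty list headed by the first argument. -/
def PTandAux {V : Type} : PTForm V → List (PTForm V) → PTForm V
  | φ, [] => φ
  | φ, ψ :: l => .and φ (PTandAux ψ l)

/-- Conjunction of a list of formulas (only used on nonempty lists). -/
def PTandList {V : Type} : List (PTForm V) → PTForm V
  | [] => .bot
  | φ :: l => PTandAux φ l

/-- The formula `p_{i₁}^{s(i₁)} ∧ … ∧ p_{iₙ}^{s(iₙ)}` describing the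
valuation `s`, where `{i₁, …, iₙ}` enumerates all of `V`. -/
noncomputable def PTdescr {V : Type} [Fintype V] (s : V → Bool) : PTForm V :=
  PTandList ((Finset.univ : Finset V).toList.map (PTlit s))

/-- Tensor disjunction `⊗` of a list of formulas; the empty tensor
disjunction is `⊥`. -/
def PTtensorList {V : Type} (l : List (PTForm V)) : PTForm V :=
  l.foldr PTForm.tensor PTForm.bot

/-- Nonempty disjunction `⊛` of a nonempty list headed by the first argument. -/
def PTnsorAux {V : Type} : PTForm V → List (PTForm V) → PTForm V
  | φ, [] => φ
  | φ, ψ :: l => .nsor φ (PTnsorAux ψ l)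

/-- Nonempty disjunction `⊛` of a list of formulas; the empty nonempty
disjunction is `⊥`. -/
def PTnsorList {V : Type} : List (PTForm V) → PTForm V
  | [] => .bot
  | φ :: l => PTnsorAux φ l

/-- Boolean disjunction `∨` of a list of formulas; the empty Boolean
disjunction is `⊥ ∧ NE`. -/
def PTborList {V : Type} (l : List (PTForm V)) : PTForm V :=
  l.foldr PTForm.bor (PTForm.and PTForm.bot PTForm.ne)

/-- The formula `Θ_X := ⊗_{s∈X} (p_{i₁}^{s(i₁)} ∧ … ∧ p_{iₙ}^{s(iₙ)})`. -/
noncomputable def PTtheta {V : Type} [Fintype V] (X : Finset (V → Bool)) : PTForm V :=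
  PTtensorList (X.toList.map PTdescr)

/-- The formula `Θ*_X := ⊗_{s∈X} (p_{i₁}^{s(i₁)} ∧ … ∧ p_{iₙ}^{s(iₙ)} ∧ NE)`. -/
noncomputable def PTthetaStar {V : Type} [Fintype V] (X : Finset (V → Bool)) : PTForm V :=
  PTtensorList (X.toList.map (fun s => .and (PTdescr s) .ne))

/-- The formula `Θ**_X := ⊛_{s∈X} (p_{i₁}^{s(i₁)} ∧ … ∧ p_{iₙ}^{s(iₙ)})`. -/
noncomputable def PTthetaSS {V : Type} [Fintype V] (X : Finset (V → Bool)) : PTForm V :=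
  PTnsorList (X.toList.map PTdescr)

/-- Logical consequence: every team satisfying all formulas of `Γ`
satisfies `φ`. -/
def PTEntails {V : Type} (Γ : Set (PTForm V)) (φ : PTForm V) : Prop :=
  ∀ X : Set (V → Bool), (∀ ψ ∈ Γ, PTSat X ψ) → PTSat X φ

/-- A team property is flat if a team is in it iff all its singleton
subteams are. -/
def IsFlat {V : Type} (P : Set (Set (V → Bool))) : Prop :=
  ∀ X : Set (V → Bool), X ∈ P ↔ ∀ s ∈ X, ({s} : Set (V → Bool)) ∈ P

/-- A team property is union closed if it is closed under unions of
nonempty subfamilies. -/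
def IsUnionClosed {V : Type} (P : Set (Set (V → Bool))) : Prop :=
  ∀ 𝒳 ⊆ P, 𝒳.Nonempty → ⋃₀ 𝒳 ∈ P

/-- The syntactic De Morgan negation of a classical formula. -/
def PTdeMorgan : PTForm ℕ → PTForm ℕ
  | .pos i => .neg i
  | .neg i => .pos i
  | .bot => .tensor (.pos 0) (.neg 0)
  | .and φ ψ => .tensor (PTdeMorgan φ) (PTdeMorgan ψ)
  | .tensor φ ψ => .and (PTdeMorgan φ) (PTdeMorgan ψ)
  | φ => φ

/-- Application of a substitution `σ` (assigning a formula to each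
propositional variable) to a formula of the atom-free team language. -/
def PTsubst (σ : ℕ → PTForm ℕ) : PTForm ℕ → PTForm ℕ
  | .pos i => σ i
  | .neg i => PTdeMorgan (σ i)
  | .and φ ψ => .and (PTsubst σ φ) (PTsubst σ ψ)
  | .tensor φ ψ => .tensor (PTsubst σ φ) (PTsubst σ ψ)
  | .nsor φ ψ => .nsor (PTsubst σ φ) (PTsubst σ ψ)
  | .bor φ ψ => .bor (PTsubst σ φ) (PTsubst σ ψ)
  | φ => φ

open Classical in
/-- The valuation `s_σ`, with `s_σ(i) = 1` iff `{s} ⊨ σ(pᵢ)`. -/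
noncomputable def PTvalSubst (σ : ℕ → PTForm ℕ) (s : ℕ → Bool) : ℕ → Bool :=
  fun i => if PTSat {s} (σ i) then true else false
/-- Finset of variables of a formula. -/
def PTvarsF : PTForm ℕ → Finset ℕ
  | .pos i => {i}
  | .neg i => {i}
  | .bot => ∅
  | .ne => ∅
  | .dep xs y => xs.toFinset ∪ {y}
  | .indep xs ys => xs.toFinset ∪ ys.toFinset
  | .incl xs ys => xs.toFinset ∪ ys.toFinset
  | .and φ ψ => PTvarsF φ ∪ PTvarsF ψ
  | .tensor φ ψ => PTvarsF φ ∪ PTvarsF ψ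
  | .nsor φ ψ => PTvarsF φ ∪ PTvarsF ψ
  | .bor φ ψ => PTvarsF φ ∪ PTvarsF ψ

lemma PTvars_sub (ψ : PTForm ℕ) : ψ.vars ⊆ ↑(PTvarsF ψ) := by
  induction ψ with
  | pos i => simp [PTForm.vars, PTvarsF]
  | neg i => simp [PTForm.vars, PTvarsF]
  | bot => simp [PTForm.vars, PTvarsF]
  | ne => simp [PTForm.vars, PTvarsF]
  | dep xs y => intro i hi; simp [PTForm.vars] at hi; simp [PTvarsF]; tauto
  | indep xs ys => intro i hi; simp [PTForm.vars] at hi; simp [PTvarsF]; tauto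
  | incl xs ys => intro i hi; simp [PTForm.vars] at hi; simp [PTvarsF]; tauto
  | and φ ψ ih1 ih2 =>
      intro i hi; rcases hi with hi | hi
      · exact Finset.coe_subset.mpr Finset.subset_union_left (ih1 hi)
      · exact Finset.coe_subset.mpr Finset.subset_union_right (ih2 hi)
  | tensor φ ψ ih1 ih2 =>
      intro i hi; rcases hi with hi | hi
      · exact Finset.coe_subset.mpr Finset.subset_union_left (ih1 hi)
      · exact Finset.coe_subset.mpr Finset.subset_union_right (ih2 hi)
  | nsor φ ψ ih1 ih2 =>
      intro i hi; rcases hi with hi | hi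
      · exact Finset.coe_subset.mpr Finset.subset_union_left (ih1 hi)
      · exact Finset.coe_subset.mpr Finset.subset_union_right (ih2 hi)
  | bor φ ψ ih1 ih2 =>
      intro i hi; rcases hi with hi | hi
      · exact Finset.coe_subset.mpr Finset.subset_union_left (ih1 hi)
      · exact Finset.coe_subset.mpr Finset.subset_union_right (ih2 hi)

/-- Locality: satisfaction only depends on the trace of the team on a set of
variables containing all variables of the formula. -/
lemma PTlocality {V : Type} (W : Set V) (ψ : PTForm V) (hv : ψ.vars ⊆ W) :
    ∀ (X X' : Set (V → Bool)),
      (∀ s ∈ X, ∃ t ∈ X', ∀ i ∈ W, s i = t i) →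
      (∀ t ∈ X', ∃ s ∈ X, ∀ i ∈ W, s i = t i) →
      PTSat X ψ → PTSat X' ψ := by
  induction ψ with
  | pos i =>
      intro X X' h1 h2 hs t ht
      obtain ⟨s, hsX, hag⟩ := h2 t ht
      have hi : i ∈ W := hv rfl
      rw [← hag i hi]; exact hs s hsX
  | neg i =>
      intro X X' h1 h2 hs t ht
      obtain ⟨s, hsX, hag⟩ := h2 t ht
      have hi : i ∈ W := hv rfl
      rw [← hag i hi]; exact hs s hsX
  | bot =>
      intro X X' h1 h2 hs
      show X' = ∅
      rw [Set.eq_empty_iff_forall_notMem]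
      intro t ht
      have hs : X = ∅ := hs
      obtain ⟨s, hsX, -⟩ := h2 t ht
      rw [hs] at hsX; exact hsX
  | ne =>
      intro X X' h1 h2 hs
      obtain ⟨s, hsX⟩ := Set.nonempty_iff_ne_empty.mpr hs
      obtain ⟨t, htX', -⟩ := h1 s hsX
      exact Set.nonempty_iff_ne_empty.mp ⟨t, htX'⟩
  | dep xs y =>
      intro X X' h1 h2 hs t ht t' ht' hag
      have hxs : ∀ i ∈ xs, i ∈ W := fun i hi => hv (Or.inl hi)
      have hy : y ∈ W := hv (Or.inr rfl)
      obtain ⟨s, hsX, hst⟩ := h2 t ht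
      obtain ⟨s', hs'X, hst'⟩ := h2 t' ht'
      have : s y = s' y := by
        apply hs s hsX s' hs'X
        intro i hi
        rw [hst i (hxs i hi), hst' i (hxs i hi)]
        exact hag i hi
      rw [← hst y hy, ← hst' y hy]; exact this
  | indep xs ys =>
      intro X X' h1 h2 hs t ht t' ht'
      have hxs : ∀ i ∈ xs, i ∈ W := fun i hi => hv (Or.inl hi)
      have hys : ∀ j ∈ ys, j ∈ W := fun j hj => hv (Or.inr hj)
      obtain ⟨s, hsX, hst⟩ := h2 t ht
      obtain ⟨s', hs'X, hst'⟩ := h2 t' ht'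
      obtain ⟨s'', hs''X, hA, hB⟩ := hs s hsX s' hs'X
      obtain ⟨t'', ht''X, hst''⟩ := h1 s'' hs''X
      refine ⟨t'', ht''X, ?_, ?_⟩
      · intro i hi; rw [← hst'' i (hxs i hi), hA i hi, hst i (hxs i hi)]
      · intro j hj; rw [← hst'' j (hys j hj), hB j hj, hst' j (hys j hj)]
  | incl xs ys =>
      intro X X' h1 h2 hs t ht
      obtain ⟨s, hsX, hst⟩ := h2 t ht
      obtain ⟨s', hs'X, hzip⟩ := hs s hsX
      obtain ⟨t', ht'X, hst'⟩ := h1 s' hs'X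
      refine ⟨t', ht'X, ?_⟩
      intro p hp
      obtain ⟨hp1, hp2⟩ := List.of_mem_zip hp
      rw [← hst p.1 (hv (Or.inl hp1)), ← hst' p.2 (hv (Or.inr hp2))]
      exact hzip p hp
  | and φ ψ ih1 ih2 =>
      intro X X' h1 h2 hs
      exact ⟨ih1 (fun i hi => hv (Or.inl hi)) X X' h1 h2 hs.1,
             ih2 (fun i hi => hv (Or.inr hi)) X X' h1 h2 hs.2⟩
  | tensor φ ψ ih1 ih2 =>
      intro X X' h1 h2 hs
      obtain ⟨Y, Z, hXYZ, hY, hZ⟩ := hs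
      refine ⟨{t ∈ X' | ∃ s ∈ Y, ∀ i ∈ W, s i = t i},
              {t ∈ X' | ∃ s ∈ Z, ∀ i ∈ W, s i = t i}, ?_, ?_, ?_⟩
      · apply Set.Subset.antisymm
        · intro t ht
          obtain ⟨s, hsX, hst⟩ := h2 t ht
          rw [hXYZ] at hsX
          rcases hsX with hsY | hsZ
          · exact Or.inl ⟨ht, s, hsY, hst⟩
          · exact Or.inr ⟨ht, s, hsZ, hst⟩
        · intro t ht; rcases ht with ht | ht <;> exact ht.1
      · apply ih1 (fun i hi => hv (Or.inl hi)) Y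
        · intro s hsY
          obtain ⟨t, htX', hst⟩ := h1 s (by rw [hXYZ]; exact Or.inl hsY)
          exact ⟨t, ⟨htX', s, hsY, hst⟩, hst⟩
        · intro t ht; exact ht.2
        · exact hY
      · apply ih2 (fun i hi => hv (Or.inr hi)) Z
        · intro s hsZ
          obtain ⟨t, htX', hst⟩ := h1 s (by rw [hXYZ]; exact Or.inr hsZ)
          exact ⟨t, ⟨htX', s, hsZ, hst⟩, hst⟩
        · intro t ht; exact ht.2
        · exact hZ
  | nsor φ ψ ih1 ih2 =>
      intro X X' h1 h2 hs
      rcases hs with hs | ⟨Y, Z, hXYZ, hYne, hZne, hY, hZ⟩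
      · left
        show X' = ∅
        rw [Set.eq_empty_iff_forall_notMem]
        intro t ht
        obtain ⟨s, hsX, -⟩ := h2 t ht
        rw [hs] at hsX; exact hsX
      · right
        refine ⟨{t ∈ X' | ∃ s ∈ Y, ∀ i ∈ W, s i = t i},
                {t ∈ X' | ∃ s ∈ Z, ∀ i ∈ W, s i = t i}, ?_, ?_, ?_, ?_, ?_⟩
        · apply Set.Subset.antisymm
          · intro t ht
            obtain ⟨s, hsX, hst⟩ := h2 t ht
            rw [hXYZ] at hsX
            rcases hsX with hsY | hsZ
            · exact Or.inl ⟨ht, s, hsY, hst⟩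
            · exact Or.inr ⟨ht, s, hsZ, hst⟩
          · intro t ht; rcases ht with ht | ht <;> exact ht.1
        · obtain ⟨s, hsY⟩ := hYne
          obtain ⟨t, htX', hst⟩ := h1 s (by rw [hXYZ]; exact Or.inl hsY)
          exact ⟨t, htX', s, hsY, hst⟩
        · obtain ⟨s, hsZ⟩ := hZne
          obtain ⟨t, htX', hst⟩ := h1 s (by rw [hXYZ]; exact Or.inr hsZ)
          exact ⟨t, htX', s, hsZ, hst⟩
        · apply ih1 (fun i hi => hv (Or.inl hi)) Y
          · intro s hsY
            obtain ⟨t, htX', hst⟩ := h1 s (by rw [hXYZ]; exact Or.inl hsY)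
            exact ⟨t, ⟨htX', s, hsY, hst⟩, hst⟩
          · intro t ht; exact ht.2
          · exact hY
        · apply ih2 (fun i hi => hv (Or.inr hi)) Z
          · intro s hsZ
            obtain ⟨t, htX', hst⟩ := h1 s (by rw [hXYZ]; exact Or.inr hsZ)
            exact ⟨t, ⟨htX', s, hsZ, hst⟩, hst⟩
          · intro t ht; exact ht.2
          · exact hZ
  | bor φ ψ ih1 ih2 =>
      intro X X' h1 h2 hs
      rcases hs with hs | hs
      · exact Or.inl (ih1 (fun i hi => hv (Or.inl hi)) X X' h1 h2 hs)
      · exact Or.inr (ih2 (fun i hi => hv (Or.inr hi)) X X' h1 h2 hs)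
/-- Lifting lemma: if a finite pattern occurs in `U`-many of the teams, then
there is a full valuation extending it all of whose finite patterns occur in
`U`-many teams. -/
lemma PTlift {ι : Type} (U : Ultrafilter ι) (XT : ι → Set (ℕ → Bool))
    (W₀ : Finset ℕ) (a : ℕ → Bool)
    (ha : {Δ | ∃ t ∈ XT Δ, ∀ i ∈ W₀, t i = a i} ∈ U) :
    ∃ s : ℕ → Bool, (∀ i ∈ W₀, s i = a i) ∧
      ∀ W : Finset ℕ, {Δ | ∃ t ∈ XT Δ, ∀ i ∈ W, t i = s i} ∈ U := by
  classical
  set A : Finset ℕ → (ℕ → Bool) → Set ι :=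
    fun W b => {Δ | ∃ t ∈ XT Δ, ∀ i ∈ W, t i = b i} with hA
  set P : ℕ → Set (ℕ → Bool) :=
    fun n => {c | (∀ i ∈ W₀, c i = a i) ∧ A (W₀ ∪ Finset.range n) c ∈ U} with hP
  have h0 : a ∈ P 0 := by
    constructor
    · intro i _; rfl
    · simpa using ha
  have step : ∀ n, ∀ c ∈ P n, ∃ c' ∈ P (n + 1),
      ∀ i ∈ W₀ ∪ Finset.range n, c' i = c i := by
    intro n c hc
    by_cases hn : n ∈ W₀
    · refine ⟨c, ⟨hc.1, ?_⟩, fun i _ => rfl⟩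
      have : W₀ ∪ Finset.range (n + 1) = W₀ ∪ Finset.range n := by
        ext i
        simp only [Finset.mem_union, Finset.mem_range, Nat.lt_succ_iff_lt_or_eq]
        constructor
        · rintro (h | h | rfl) <;> [exact Or.inl h; exact Or.inr h; exact Or.inl hn]
        · rintro (h | h) <;> [exact Or.inl h; exact Or.inr (Or.inl h)]
      rw [this]; exact hc.2
    · have hincl : A (W₀ ∪ Finset.range n) c ⊆
          A (W₀ ∪ Finset.range (n + 1)) (Function.update c n true) ∪
          A (W₀ ∪ Finset.range (n + 1)) (Function.update c n false) := by
        intro Δ hΔ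
        obtain ⟨t, htX, hag⟩ := hΔ
        have key : ∀ b, t n = b →
            Δ ∈ A (W₀ ∪ Finset.range (n + 1)) (Function.update c n b) := by
          intro b hb
          refine ⟨t, htX, ?_⟩
          intro i hi
          by_cases hin : i = n
          · subst hin; rw [Function.update_self]; exact hb
          · rw [Function.update_of_ne hin]
            apply hag
            simp only [Finset.mem_union, Finset.mem_range] at hi ⊢
            rcases hi with h | h
            · exact Or.inl h
            · exact Or.inr (lt_of_le_of_ne (Nat.lt_succ_iff.mp h) hin)
        cases hb : t n
        · exact Or.inr (key false hb)
        · exact Or.inl (key true hb)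
      have hun : A (W₀ ∪ Finset.range (n + 1)) (Function.update c n true) ∪
          A (W₀ ∪ Finset.range (n + 1)) (Function.update c n false) ∈ U :=
        U.toFilter.mem_of_superset hc.2 hincl
      rcases (Ultrafilter.union_mem_iff (f := U)).mp hun with hb | hb
      · refine ⟨Function.update c n true, ⟨?_, hb⟩, ?_⟩
        · intro i hi
          rw [Function.update_of_ne (by rintro rfl; exact hn hi)]
          exact hc.1 i hi
        · intro i hi
          rcases Finset.mem_union.mp hi with h | h
          · exact Function.update_of_ne (by rintro rfl; exact hn h) _ _
          · exact Function.update_of_ne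
              (by rintro rfl; exact lt_irrefl _ (Finset.mem_range.mp h)) _ _
      · refine ⟨Function.update c n false, ⟨?_, hb⟩, ?_⟩
        · intro i hi
          rw [Function.update_of_ne (by rintro rfl; exact hn hi)]
          exact hc.1 i hi
        · intro i hi
          rcases Finset.mem_union.mp hi with h | h
          · exact Function.update_of_ne (by rintro rfl; exact hn h) _ _
          · exact Function.update_of_ne
              (by rintro rfl; exact lt_irrefl _ (Finset.mem_range.mp h)) _ _
  choose g hg1 hg2 using step
  let f : ∀ _ : ℕ, {c : ℕ → Bool // c ∈ P _} := fun n =>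
    Nat.rec (motive := fun n => {c : ℕ → Bool // c ∈ P n}) ⟨a, h0⟩
      (fun m p => ⟨g m p.1 p.2, hg1 m p.1 p.2⟩) n
  have agree : ∀ n, ∀ i ∈ W₀ ∪ Finset.range n, (f (n + 1)).1 i = (f n).1 i :=
    fun n => hg2 n (f n).1 (f n).2
  have mono : ∀ m n, m ≤ n → ∀ i ∈ W₀ ∪ Finset.range m, (f n).1 i = (f m).1 i := by
    intro m n h
    induction n, h using Nat.le_induction with
    | base => intro i _; rfl
    | succ n hmn ih =>
        intro i hi
        have hi' : i ∈ W₀ ∪ Finset.range n := by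
          rcases Finset.mem_union.mp hi with h' | h'
          · exact Finset.mem_union_left _ h'
          · exact Finset.mem_union_right _
              (Finset.mem_range.mpr (lt_of_lt_of_le (Finset.mem_range.mp h') hmn))
        rw [agree n i hi', ih i hi]
  set s : ℕ → Bool := fun n => (f (n + 1)).1 n with hs
  have hs_agree : ∀ m, ∀ i ∈ W₀ ∪ Finset.range m, s i = (f m).1 i := by
    intro m i hi
    have h1 : i ∈ W₀ ∪ Finset.range (i + 1) :=
      Finset.mem_union_right _ (Finset.mem_range.mpr (Nat.lt_succ_self i))
    have hk1 : (f (max m (i + 1))).1 i = (f (i + 1)).1 i :=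
      mono (i + 1) _ (le_max_right _ _) i h1
    have hk2 : (f (max m (i + 1))).1 i = (f m).1 i :=
      mono m _ (le_max_left _ _) i hi
    exact (hk1.symm.trans hk2)
  refine ⟨s, ?_, ?_⟩
  · intro i hi
    exact hs_agree 0 i (Finset.mem_union_left _ hi)
  · intro W
    set m := (W.sup id) + 1 with hm
    have hWm : ∀ i ∈ W, i ∈ W₀ ∪ Finset.range m := by
      intro i hi
      exact Finset.mem_union_right _
        (Finset.mem_range.mpr (Nat.lt_succ_of_le (Finset.le_sup (f := id) hi)))
    have hAm : A (W₀ ∪ Finset.range m) (f m).1 ∈ U := (f m).2.2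
    apply U.toFilter.mem_of_superset hAm
    rintro Δ ⟨t, htX, hag⟩
    exact ⟨t, htX, fun i hi => by
      rw [hag i (hWm i hi), ← hs_agree m i (hWm i hi)]⟩
/-- Trace lemma: `U`-many of the teams have exactly the `U`-limit trace on a
finite set `W` of variables. -/
lemma PTtrace {ι : Type} (U : Ultrafilter ι) (XT : ι → Set (ℕ → Bool)) (W : Finset ℕ) :
    {Δ | ∀ a : ℕ → Bool,
        (∃ t ∈ XT Δ, ∀ i ∈ W, t i = a i) ↔
          {Δ' | ∃ t ∈ XT Δ', ∀ i ∈ W, t i = a i} ∈ U} ∈ U := by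
  classical
  set A : (ℕ → Bool) → Set ι := fun b => {Δ | ∃ t ∈ XT Δ, ∀ i ∈ W, t i = b i} with hA
  set N : (ℕ → Bool) → (ℕ → Bool) := fun b i => if i ∈ W then b i else false with hN
  have hNag : ∀ b, ∀ i ∈ W, N b i = b i := by intro b i hi; simp [hN, hi]
  have hAeq : ∀ b b', (∀ i ∈ W, b i = b' i) → A b = A b' := by
    intro b b' hbb; ext Δ
    constructor <;> rintro ⟨t, ht, hag⟩
    · exact ⟨t, ht, fun i hi => (hag i hi).trans (hbb i hi)⟩
    · exact ⟨t, ht, fun i hi => (hag i hi).trans (hbb i hi).symm⟩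
  set R : Set (ℕ → Bool) := {b | ∀ i, i ∉ W → b i = false} with hR
  have hRfin : R.Finite := by
    have hinj : Set.InjOn (fun (b : ℕ → Bool) => fun i : ↥W => b i) R := by
      intro b hb b' hb' hbe
      funext i
      by_cases hi : i ∈ W
      · exact congrFun hbe ⟨i, hi⟩
      · rw [hb i hi, hb' i hi]
    exact Set.Finite.of_finite_image (Set.toFinite _) hinj
  have hmem : ∀ b ∈ R,
      {Δ | (∃ t ∈ XT Δ, ∀ i ∈ W, t i = b i) ↔ A b ∈ U} ∈ U := by
    intro b _
    by_cases hb : A b ∈ U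
    · exact U.toFilter.mem_of_superset hb (fun Δ hΔ => iff_of_true hΔ hb)
    · exact U.toFilter.mem_of_superset (Ultrafilter.compl_mem_iff_notMem.mpr hb)
        (fun Δ hΔ => iff_of_false hΔ hb)
  have hbig : (⋂ b ∈ R, {Δ | (∃ t ∈ XT Δ, ∀ i ∈ W, t i = b i) ↔ A b ∈ U}) ∈ U :=
    (Filter.biInter_mem hRfin).mpr hmem
  apply U.toFilter.mem_of_superset hbig
  intro Δ hΔ a
  have hNa : N a ∈ R := by intro i hi; simp [hN, hi]
  have h1 : (∃ t ∈ XT Δ, ∀ i ∈ W, t i = N a i) ↔ A (N a) ∈ U :=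
    Set.mem_iInter₂.mp hΔ (N a) hNa
  constructor
  · rintro ⟨t, ht, hag⟩
    have h2 : A (N a) ∈ U :=
      h1.mp ⟨t, ht, fun i hi => (hag i hi).trans (hNag a i hi).symm⟩
    rw [hAeq (N a) a (hNag a)] at h2
    exact h2
  · intro hAa
    have h2 : A (N a) ∈ U := by rw [hAeq (N a) a (hNag a)]; exact hAa
    obtain ⟨t, ht, hag⟩ := h1.mpr h2
    exact ⟨t, ht, fun i hi => (hag i hi).trans (hNag a i hi)⟩
/-- **Compactness Theorem.**  If `Γ ⊨ φ` for a set `Γ ∪ {φ}` of FPT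
formulas, then `Γ₀ ⊨ φ` for some finite `Γ₀ ⊆ Γ`. -/
theorem compactness (Γ : Set (PTForm ℕ)) (φ : PTForm ℕ) (h : PTEntails Γ φ) :
    ∃ Γ₀ : Finset (PTForm ℕ), ↑Γ₀ ⊆ Γ ∧ PTEntails ↑Γ₀ φ := by
  classical
  by_contra hcon
  push_neg at hcon
  have hX : ∀ Δ : Finset ↥Γ, ∃ X : Set (ℕ → Bool),
      (∀ ψ : ↥Γ, ψ ∈ Δ → PTSat X ψ.1) ∧ ¬ PTSat X φ := by
    intro Δ
    have hsub : ↑(Δ.image Subtype.val) ⊆ Γ := by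
      intro ψ hψ
      simp only [Finset.coe_image, Set.mem_image, Finset.mem_coe] at hψ
      obtain ⟨ψ', -, rfl⟩ := hψ
      exact ψ'.2
    have hne := hcon (Δ.image Subtype.val) hsub
    unfold PTEntails at hne
    push_neg at hne
    obtain ⟨X, hX1, hX2⟩ := hne
    refine ⟨X, fun ψ hψ => hX1 ψ.1 ?_, hX2⟩
    simp only [Finset.mem_coe, Finset.mem_image]
    exact ⟨ψ, hψ, rfl⟩
  choose XT hXT1 hXT2 using hX
  haveI : Nonempty (Finset ↥Γ) := ⟨∅⟩
  let U : Ultrafilter (Finset ↥Γ) := Ultrafilter.of Filter.atTop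
  have hU : (↑U : Filter (Finset ↥Γ)) ≤ Filter.atTop := Ultrafilter.of_le _
  set X : Set (ℕ → Bool) :=
    {s | ∀ W : Finset ℕ, {Δ | ∃ t ∈ XT Δ, ∀ i ∈ W, t i = s i} ∈ U} with hXdef
  have main : ∀ (W : Finset ℕ) (Δ₀ : Finset ↥Γ), ∃ Δ, Δ₀ ⊆ Δ ∧
      (∀ t ∈ XT Δ, ∃ s ∈ X, ∀ i ∈ W, s i = t i) ∧
      (∀ s ∈ X, ∃ t ∈ XT Δ, ∀ i ∈ W, t i = s i) := by
    intro W Δ₀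
    have h1 := PTtrace U XT W
    have h2 : {Δ : Finset ↥Γ | Δ₀ ≤ Δ} ∈ U := Filter.le_def.mp hU _ (Filter.mem_atTop Δ₀)
    have h3 : ({Δ | ∀ a : ℕ → Bool,
        (∃ t ∈ XT Δ, ∀ i ∈ W, t i = a i) ↔
          {Δ' | ∃ t ∈ XT Δ', ∀ i ∈ W, t i = a i} ∈ U} ∩ {Δ | Δ₀ ≤ Δ}) ∈ U :=
      U.toFilter.inter_mem h1 h2
    obtain ⟨Δ, hΔtr, hΔ0⟩ := Filter.nonempty_of_mem h3
    refine ⟨Δ, hΔ0, ?_, ?_⟩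
    · intro t ht
      have hAt : {Δ' | ∃ t' ∈ XT Δ', ∀ i ∈ W, t' i = t i} ∈ U :=
        (hΔtr t).mp ⟨t, ht, fun i _ => rfl⟩
      obtain ⟨s, hsW, hsX⟩ := PTlift U XT W t hAt
      exact ⟨s, hsX, hsW⟩
    · intro s hsX
      exact (hΔtr s).mpr (hsX W)
  have hXsat : ∀ ψ ∈ Γ, PTSat X ψ := by
    intro ψ hψ
    obtain ⟨Δ, hΔ0, hd1, hd2⟩ := main (PTvarsF ψ) {⟨ψ, hψ⟩}
    have hsat : PTSat (XT Δ) ψ := hXT1 Δ ⟨ψ, hψ⟩ (hΔ0 (Finset.mem_singleton_self _))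
    apply PTlocality (↑(PTvarsF ψ)) ψ (PTvars_sub ψ) (XT Δ) X _ _ hsat
    · intro t ht
      obtain ⟨s, hsX, hag⟩ := hd1 t ht
      exact ⟨s, hsX, fun i hi => (hag i (Finset.mem_coe.mp hi)).symm⟩
    · intro s hsX
      obtain ⟨t, htΔ, hag⟩ := hd2 s hsX
      exact ⟨t, htΔ, fun i hi => hag i (Finset.mem_coe.mp hi)⟩
  have hXφ : PTSat X φ := h X hXsat
  obtain ⟨Δ, -, hd1, hd2⟩ := main (PTvarsF φ) ∅
  apply hXT2 Δ
  apply PTlocality (↑(PTvarsF φ)) φ (PTvars_sub φ) X (XT Δ) _ _ hXφ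
  · intro s hsX
    obtain ⟨t, htΔ, hag⟩ := hd2 s hsX
    exact ⟨t, htΔ, fun i hi => (hag i (Finset.mem_coe.mp hi)).symm⟩
  · intro t ht
    obtain ⟨s, hsX, hag⟩ := hd1 t ht
    exact ⟨s, hsX, fun i hi => hag i (Finset.mem_coe.mp hi)⟩
end

section
/- Substitution Lemma: for every formula φ of the atom-free team language and every classical substitution σ, and every team X, we have X ⊨ σ(φ) if and only if X_σ ⊨ φ, where s_σ is the valuation with s_σ(i)=1 iff {s} ⊨ σ(p_i), and X_σ = {s_σ : s ∈ X}. -/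
lemma PTSat_empty_classical {V : Type} {α : PTForm V} (h : IsClassical α) :
    PTSat (∅ : Set (V → Bool)) α := by
  induction h with
  | pos i => intro s hs; exact absurd hs (Set.notMem_empty s)
  | neg i => intro s hs; exact absurd hs (Set.notMem_empty s)
  | bot => rfl
  | and _ _ ih1 ih2 => exact ⟨ih1, ih2⟩
  | tensor _ _ ih1 ih2 => exact ⟨∅, ∅, by simp, ih1, ih2⟩

lemma PTSat_flat {V : Type} {α : PTForm V} (h : IsClassical α) (X : Set (V → Bool)) :
    PTSat X α ↔ ∀ s ∈ X, PTSat {s} α := by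
  induction h generalizing X with
  | pos i => simp [PTSat]
  | neg i => simp [PTSat]
  | bot =>
    constructor
    · rintro rfl s hs; exact absurd hs (Set.notMem_empty s)
    · intro h
      ext s; simp only [Set.mem_empty_iff_false, iff_false]
      intro hs
      have := h s hs
      exact (Set.singleton_ne_empty s) this
  | and h1 h2 ih1 ih2 =>
    constructor
    · rintro ⟨a, b⟩ s hs
      exact ⟨(ih1 X).mp a s hs, (ih2 X).mp b s hs⟩
    · intro h
      exact ⟨(ih1 X).mpr fun s hs => (h s hs).1, (ih2 X).mpr fun s hs => (h s hs).2⟩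
  | @tensor φ ψ h1 h2 ih1 ih2 =>
    constructor
    · rintro ⟨Y, Z, rfl, hY, hZ⟩ s hs
      cases hs with
      | inl hs =>
        exact ⟨{s}, ∅, by simp, (ih1 Y).mp hY s hs, PTSat_empty_classical h2⟩
      | inr hs =>
        exact ⟨∅, {s}, by simp, PTSat_empty_classical h1, (ih2 Z).mp hZ s hs⟩
    · intro h
      refine ⟨{s ∈ X | PTSat {s} φ}, {s ∈ X | ¬ PTSat {s} φ}, ?_, ?_, ?_⟩
      · ext s
        simp only [Set.mem_union, Set.mem_setOf_eq]
        constructor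
        · intro hs; by_cases hc : PTSat {s} φ
          · exact Or.inl ⟨hs, hc⟩
          · exact Or.inr ⟨hs, hc⟩
        · rintro (⟨hs, _⟩ | ⟨hs, _⟩) <;> exact hs
      · exact (ih1 _).mpr fun s hs => hs.2
      · refine (ih2 _).mpr fun s hs => ?_
        obtain ⟨A, B, hAB, hA, hB⟩ := h s hs.1
        have hsAB : s ∈ A ∪ B := hAB ▸ rfl
        cases hsAB with
        | inl hsA =>
          have : A = {s} := by
            apply Set.Subset.antisymm
            · rw [hAB]; exact Set.subset_union_left
            · simpa using hsA
          exact absurd (this ▸ hA) hs.2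
        | inr hsB =>
          have : B = {s} := by
            apply Set.Subset.antisymm
            · rw [hAB]; exact Set.subset_union_right
            · simpa using hsB
          exact this ▸ hB

lemma PTSat_singleton_tensor {V : Type} {φ ψ : PTForm V} (hφ : IsClassical φ)
    (hψ : IsClassical ψ) (s : V → Bool) :
    PTSat {s} (.tensor φ ψ) ↔ PTSat {s} φ ∨ PTSat {s} ψ := by
  constructor
  · rintro ⟨Y, Z, hYZ, hY, hZ⟩
    have hs : s ∈ Y ∪ Z := hYZ ▸ rfl
    cases hs with
    | inl h =>
      left
      have : Y = {s} := by
        apply Set.Subset.antisymm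
        · rw [hYZ]; exact Set.subset_union_left
        · simpa using h
      exact this ▸ hY
    | inr h =>
      right
      have : Z = {s} := by
        apply Set.Subset.antisymm
        · rw [hYZ]; exact Set.subset_union_right
        · simpa using h
      exact this ▸ hZ
  · rintro (h | h)
    · exact ⟨{s}, ∅, by simp, h, PTSat_empty_classical hψ⟩
    · exact ⟨∅, {s}, by simp, PTSat_empty_classical hφ, h⟩

lemma PTdeMorgan_classical {α : PTForm ℕ} (h : IsClassical α) :
    IsClassical (PTdeMorgan α) := by
  induction h with
  | pos i => exact .neg i
  | neg i => exact .pos i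
  | bot => exact .tensor (.pos 0) (.neg 0)
  | and _ _ ih1 ih2 => exact .tensor ih1 ih2
  | tensor _ _ ih1 ih2 => exact .and ih1 ih2

lemma PTSat_deMorgan {α : PTForm ℕ} (h : IsClassical α) (s : ℕ → Bool) :
    PTSat {s} (PTdeMorgan α) ↔ ¬ PTSat {s} α := by
  induction h with
  | pos i => simp [PTdeMorgan, PTSat]
  | neg i => simp [PTdeMorgan, PTSat]
  | bot =>
    show PTSat {s} (.tensor (.pos 0) (.neg 0)) ↔ ¬ ({s} = (∅ : Set (ℕ → Bool)))
    rw [PTSat_singleton_tensor (.pos 0) (.neg 0)]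
    constructor
    · intro _ h; exact (Set.singleton_ne_empty s) h
    · intro _
      rcases Bool.eq_false_or_eq_true (s 0) with h | h
      · left; intro t ht; rw [Set.mem_singleton_iff] at ht; subst ht; exact h
      · right; intro t ht; rw [Set.mem_singleton_iff] at ht; subst ht; exact h
  | @and φ ψ h1 h2 ih1 ih2 =>
    show PTSat {s} (.tensor (PTdeMorgan φ) (PTdeMorgan ψ)) ↔ ¬ PTSat {s} (.and φ ψ)
    rw [PTSat_singleton_tensor (PTdeMorgan_classical h1) (PTdeMorgan_classical h2),
      ih1, ih2]
    show _ ↔ ¬ (PTSat {s} φ ∧ PTSat {s} ψ)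
    tauto
  | @tensor φ ψ h1 h2 ih1 ih2 =>
    show PTSat {s} (.and (PTdeMorgan φ) (PTdeMorgan ψ)) ↔ ¬ PTSat {s} (.tensor φ ψ)
    rw [PTSat_singleton_tensor h1 h2]
    show PTSat {s} (PTdeMorgan φ) ∧ PTSat {s} (PTdeMorgan ψ) ↔ _
    rw [ih1, ih2]
    tauto

lemma PTvalSubst_true_iff (σ : ℕ → PTForm ℕ) (s : ℕ → Bool) (i : ℕ) :
    PTvalSubst σ s i = true ↔ PTSat {s} (σ i) := by
  simp [PTvalSubst]

lemma image_union_split {α β : Type*} (f : α → β) (X : Set α) (Y' Z' : Set β)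
    (hU : f '' X = Y' ∪ Z') :
    X = {s ∈ X | f s ∈ Y'} ∪ {s ∈ X | f s ∈ Z'} ∧
      f '' {s ∈ X | f s ∈ Y'} = Y' ∧ f '' {s ∈ X | f s ∈ Z'} = Z' := by
  refine ⟨?_, ?_, ?_⟩
  · ext s
    simp only [Set.mem_union, Set.mem_setOf_eq]
    constructor
    · intro hs
      have : f s ∈ Y' ∪ Z' := hU ▸ ⟨s, hs, rfl⟩
      rcases this with h | h
      · exact Or.inl ⟨hs, h⟩
      · exact Or.inr ⟨hs, h⟩
    · rintro (⟨hs, _⟩ | ⟨hs, _⟩) <;> exact hs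
  · ext t
    constructor
    · rintro ⟨s, ⟨_, hs⟩, rfl⟩; exact hs
    · intro ht
      obtain ⟨s, hs, rfl⟩ : t ∈ f '' X := hU ▸ Set.mem_union_left _ ht
      exact ⟨s, ⟨hs, ht⟩, rfl⟩
  · ext t
    constructor
    · rintro ⟨s, ⟨_, hs⟩, rfl⟩; exact hs
    · intro ht
      obtain ⟨s, hs, rfl⟩ : t ∈ f '' X := hU ▸ Set.mem_union_right _ ht
      exact ⟨s, ⟨hs, ht⟩, rfl⟩

/-- **Substitution Lemma.**  For a classical substitution `σ`, a formula
`φ` of the atom-free team language, and a team `X`: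
`X ⊨ σ(φ)` iff `X_σ ⊨ φ`, where `X_σ = {s_σ : s ∈ X}`. -/
theorem substitution_lemma (σ : ℕ → PTForm ℕ) (hσ : ∀ i, IsClassical (σ i))
    (φ : PTForm ℕ) (hφ : IsAtomFree φ) (X : Set (ℕ → Bool)) :
    PTSat X (PTsubst σ φ) ↔ PTSat (PTvalSubst σ '' X) φ := by
  induction hφ generalizing X with
  | pos i =>
    show PTSat X (σ i) ↔ ∀ t ∈ PTvalSubst σ '' X, t i = true
    rw [PTSat_flat (hσ i)]
    constructor
    · rintro h t ⟨s, hs, rfl⟩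
      exact (PTvalSubst_true_iff σ s i).mpr (h s hs)
    · intro h s hs
      exact (PTvalSubst_true_iff σ s i).mp (h _ ⟨s, hs, rfl⟩)
  | neg i =>
    show PTSat X (PTdeMorgan (σ i)) ↔ ∀ t ∈ PTvalSubst σ '' X, t i = false
    rw [PTSat_flat (PTdeMorgan_classical (hσ i))]
    constructor
    · rintro h t ⟨s, hs, rfl⟩
      have := (PTSat_deMorgan (hσ i) s).mp (h s hs)
      simp only [PTvalSubst, if_neg this]
    · intro h s hs
      rw [PTSat_deMorgan (hσ i)]
      intro hc
      have := h _ ⟨s, hs, rfl⟩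
      rw [show PTvalSubst σ s i = true from (PTvalSubst_true_iff σ s i).mpr hc] at this
      simp at this
  | bot =>
    show X = ∅ ↔ PTvalSubst σ '' X = ∅
    rw [Set.image_eq_empty]
  | ne =>
    show X ≠ ∅ ↔ PTvalSubst σ '' X ≠ ∅
    rw [Ne, Ne, Set.image_eq_empty]
  | and h1 h2 ih1 ih2 =>
    show PTSat X _ ∧ PTSat X _ ↔ PTSat _ _ ∧ PTSat _ _
    rw [ih1, ih2]
  | @tensor φ ψ h1 h2 ih1 ih2 =>
    constructor
    · rintro ⟨Y, Z, rfl, hY, hZ⟩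
      exact ⟨PTvalSubst σ '' Y, PTvalSubst σ '' Z, Set.image_union _ _ _,
        (ih1 Y).mp hY, (ih2 Z).mp hZ⟩
    · rintro ⟨Y', Z', hU, hY', hZ'⟩
      obtain ⟨hX, hY, hZ⟩ := image_union_split (PTvalSubst σ) X Y' Z' hU
      exact ⟨_, _, hX, (ih1 _).mpr (by rw [hY]; exact hY'), (ih2 _).mpr (by rw [hZ]; exact hZ')⟩
  | @nsor φ ψ h1 h2 ih1 ih2 =>
    constructor
    · rintro (rfl | ⟨Y, Z, rfl, hYne, hZne, hY, hZ⟩)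
      · left; exact Set.image_empty _
      · right
        exact ⟨PTvalSubst σ '' Y, PTvalSubst σ '' Z, Set.image_union _ _ _,
          hYne.image _, hZne.image _, (ih1 Y).mp hY, (ih2 Z).mp hZ⟩
    · rintro (hE | ⟨Y', Z', hU, hY'ne, hZ'ne, hY', hZ'⟩)
      · left; exact Set.image_eq_empty.mp hE
      · right
        obtain ⟨hX, hY, hZ⟩ := image_union_split (PTvalSubst σ) X Y' Z' hU
        refine ⟨_, _, hX, ?_, ?_, (ih1 _).mpr (by rw [hY]; exact hY'), (ih2 _).mpr (by rw [hZ]; exact hZ')⟩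
        · rw [← Set.image_nonempty (f := PTvalSubst σ), hY]; exact hY'ne
        · rw [← Set.image_nonempty (f := PTvalSubst σ), hZ]; exact hZ'ne
  | bor h1 h2 ih1 ih2 =>
    show PTSat X _ ∨ PTSat X _ ↔ PTSat _ _ ∨ PTSat _ _
    rw [ih1, ih2]
end

section
/- For any finite nonempty collections {X_f : f ∈ F} and {Y_g : g ∈ G} of teams on a fixed finite index set N = {i₁,…,iₙ}, the following are equivalent: (a) ⋁_{f∈F} Θ*_{X_f} ⊨ ⋁_{g∈G} Θ*_{Y_g}; (b) for each f ∈ F there exists g ∈ G with X_f = Y_g. -/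
/-! The conjunct `p_{i₁}^{s(i₁)} ∧ … ∧ p_{iₙ}^{s(iₙ)} ∧ NE` is satisfied by the team `{s}` and by
no other, so a tensor disjunction of such conjuncts over `X` is satisfied exactly by the team `X`:
`Θ*_X` defines `X` outright. Hence `⋁_{f} Θ*_{X_f}` is satisfied exactly by the teams `X_f`, and
one such disjunction entails another iff every team of the first family occurs in the second. -/

section

variable {V : Type}

theorem ptSat_andAux_iff (Z : Set (V → Bool)) (φ : PTForm V) (l : List (PTForm V)) :
    PTSat Z (PTandAux φ l) ↔ ∀ ψ ∈ φ :: l, PTSat Z ψ := by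
  induction l generalizing φ with
  | nil => simp [PTandAux]
  | cons ψ l ih => simp only [PTandAux, PTSat, ih, List.forall_mem_cons]

theorem ptSat_andList_iff (Z : Set (V → Bool)) {l : List (PTForm V)} (hl : l ≠ []) :
    PTSat Z (PTandList l) ↔ ∀ ψ ∈ l, PTSat Z ψ := by
  obtain ⟨φ, l, rfl⟩ := List.exists_cons_of_ne_nil hl
  exact ptSat_andAux_iff Z φ l

theorem ptSat_lit_iff (Z : Set (V → Bool)) (s : V → Bool) (i : V) :
    PTSat Z (PTlit s i) ↔ ∀ t ∈ Z, t i = s i := by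
  unfold PTlit
  cases s i <;> simp [PTSat]

theorem ptSat_borList_iff (Z : Set (V → Bool)) (l : List (PTForm V)) :
    PTSat Z (PTborList l) ↔ ∃ φ ∈ l, PTSat Z φ := by
  induction l with
  | nil => simp [PTborList, PTSat]
  | cons φ l ih =>
    rw [PTborList, List.foldr_cons, PTSat, ← PTborList, ih, List.exists_mem_cons_iff]

theorem ptSat_tensorList_map_iff_of_defines_singleton (φ : (V → Bool) → PTForm V)
    (hφ : ∀ (Y : Set (V → Bool)) s, PTSat Y (φ s) ↔ Y = {s})
    (Z : Set (V → Bool)) (l : List (V → Bool)) :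
    PTSat Z (PTtensorList (l.map φ)) ↔ Z = {t | t ∈ l} := by
  induction l generalizing Z with
  | nil => simp [PTtensorList, PTSat]
  | cons s l ih =>
    change (∃ Y W, Z = Y ∪ W ∧ PTSat Y (φ s) ∧ PTSat W (PTtensorList (l.map φ))) ↔ _
    simp only [hφ, ih, List.mem_cons, Set.ofPred_or, Set.ofPred_eq_eq_singleton]
    constructor
    · rintro ⟨_, _, rfl, rfl, rfl⟩
      rfl
    · rintro rfl
      exact ⟨_, _, rfl, rfl, rfl⟩

end

section

variable {V : Type} [Fintype V] [Nonempty V]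

theorem ptSat_descr_iff (Z : Set (V → Bool)) (s : V → Bool) :
    PTSat Z (PTdescr s) ↔ Z ⊆ {s} := by
  have hne : (Finset.univ : Finset V).toList.map (PTlit s) ≠ [] := by
    simp [Finset.univ_nonempty.ne_empty]
  rw [PTdescr, ptSat_andList_iff Z hne]
  simp only [List.forall_mem_map, Finset.mem_toList, Finset.mem_univ, forall_const,
    ptSat_lit_iff, Set.subset_singleton_iff, funext_iff]
  exact ⟨fun h t ht i => h i t ht, fun h i t ht => h t ht i⟩

theorem ptSat_descr_and_ne_iff (Z : Set (V → Bool)) (s : V → Bool) :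
    PTSat Z (.and (PTdescr s) .ne) ↔ Z = {s} := by
  rw [PTSat, ptSat_descr_iff, PTSat, Set.subset_singleton_iff_eq, ← Set.nonempty_iff_ne_empty]
  constructor
  · rintro ⟨h | h, hZ⟩
    · exact absurd h hZ.ne_empty
    · exact h
  · rintro rfl
    exact ⟨Or.inr rfl, Set.singleton_nonempty s⟩

theorem ptSat_thetaStar_iff (Z : Set (V → Bool)) (X : Finset (V → Bool)) :
    PTSat Z (PTthetaStar X) ↔ Z = ↑X := by
  rw [PTthetaStar, ptSat_tensorList_map_iff_of_defines_singleton _ ptSat_descr_and_ne_iff]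
  simp only [Finset.mem_toList, Finset.setOfPred_mem]

theorem ptSat_borList_thetaStar_iff {F : Type} [Fintype F] (X : F → Finset (V → Bool))
    (Z : Set (V → Bool)) :
    PTSat Z (PTborList ((Finset.univ : Finset F).toList.map fun f => PTthetaStar (X f))) ↔
      ∃ f, Z = ↑(X f) := by
  simp [ptSat_borList_iff, ptSat_thetaStar_iff]

end

theorem thetaStar_bor_entailment_general (V F G : Type) [Fintype V] [Nonempty V]
    [Fintype F] [Fintype G]
    (Xf : F → Finset (V → Bool)) (Yg : G → Finset (V → Bool)) :
    (∀ Z : Set (V → Bool),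
        PTSat Z (PTborList ((Finset.univ : Finset F).toList.map
          (fun f => PTthetaStar (Xf f)))) →
        PTSat Z (PTborList ((Finset.univ : Finset G).toList.map
          (fun g => PTthetaStar (Yg g))))) ↔
    (∀ f : F, ∃ g : G, Xf f = Yg g) := by
  simp only [ptSat_borList_thetaStar_iff, forall_exists_index]
  rw [forall_comm]
  simp only [forall_eq, Finset.coe_inj]

/-- For finite nonempty collections `{X_f : f ∈ F}` and `{Y_g : g ∈ G}` of
teams on a fixed finite (nonempty) index set, `⋁_{f∈F} Θ*_{X_f}` entails
`⋁_{g∈G} Θ*_{Y_g}` if and only if each `X_f` equals some `Y_g`. -/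
theorem thetaStar_bor_entailment (V F G : Type) [Fintype V] [Nonempty V]
    [Fintype F] [Nonempty F] [Fintype G] [Nonempty G]
    (Xf : F → Finset (V → Bool)) (Yg : G → Finset (V → Bool)) :
    (∀ Z : Set (V → Bool),
        PTSat Z (PTborList ((Finset.univ : Finset F).toList.map
          (fun f => PTthetaStar (Xf f)))) →
        PTSat Z (PTborList ((Finset.univ : Finset G).toList.map
          (fun g => PTthetaStar (Yg g))))) ↔
    (∀ f : F, ∃ g : G, Xf f = Yg g) :=
  thetaStar_bor_entailment_general V F G Xf Yg
end

section
/- Normal form for PT⁺: every formula φ in the language of PT⁺ whose variables are among {p_{i₁},…,p_{iₙ}} is semantically equivalent to a formula ⋁_{f∈F} Θ*_{X_f} for some finite (possibly empty) family {X_f : f ∈ F} of teams on N = {i₁,…,iₙ}, where the empty Boolean disjunction is ⊥ ∧ NE; here semantic equivalence means that exactly the same teams satisfy the two formulas. -/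
lemma sat_PTlit {V : Type} (X : Set (V → Bool)) (s : V → Bool) (i : V) :
    PTSat X (PTlit s i) ↔ ∀ t ∈ X, t i = s i := by
  unfold PTlit
  cases hs : s i <;> simp [hs, PTSat]

lemma sat_PTandAux {V : Type} (X : Set (V → Bool)) (φ : PTForm V)
    (l : List (PTForm V)) :
    PTSat X (PTandAux φ l) ↔ PTSat X φ ∧ ∀ ψ ∈ l, PTSat X ψ := by
  induction l generalizing φ with
  | nil => simp [PTandAux]
  | cons ψ l ih =>
    show PTSat X φ ∧ PTSat X (PTandAux ψ l) ↔ _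
    rw [ih]
    simp only [List.mem_cons]
    constructor
    · rintro ⟨h1, h2, h3⟩
      exact ⟨h1, by rintro χ (rfl | hχ); exacts [h2, h3 χ hχ]⟩
    · rintro ⟨h1, h2⟩
      exact ⟨h1, h2 ψ (Or.inl rfl), fun χ hχ => h2 χ (Or.inr hχ)⟩

lemma sat_PTdescr {V : Type} [Fintype V] [Nonempty V] (X : Set (V → Bool))
    (s : V → Bool) :
    PTSat X (PTdescr s) ↔ ∀ t ∈ X, t = s := by
  obtain ⟨a, l, hl⟩ : ∃ a l, (Finset.univ : Finset V).toList = a :: l := by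
    cases h : (Finset.univ : Finset V).toList with
    | nil =>
      exact absurd (Finset.toList_eq_nil.mp h)
        (Finset.univ_nonempty (α := V)).ne_empty
    | cons a l => exact ⟨a, l, rfl⟩
  have hmem : ∀ i : V, i ∈ a :: l := fun i =>
    hl ▸ Finset.mem_toList.mpr (Finset.mem_univ i)
  unfold PTdescr
  rw [hl]
  show PTSat X (PTandAux (PTlit s a) (l.map (PTlit s))) ↔ _
  rw [sat_PTandAux]
  constructor
  · rintro ⟨h1, h2⟩ t ht
    funext i
    rcases List.mem_cons.mp (hmem i) with rfl | hi
    · exact (sat_PTlit X s i).mp h1 t ht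
    · exact (sat_PTlit X s i).mp (h2 _ (List.mem_map.mpr ⟨i, hi, rfl⟩)) t ht
  · intro h
    constructor
    · exact (sat_PTlit X s a).mpr fun t ht => by rw [h t ht]
    · intro ψ hψ
      obtain ⟨i, _, rfl⟩ := List.mem_map.mp hψ
      exact (sat_PTlit X s i).mpr fun t ht => by rw [h t ht]

lemma sat_thetaStarList {V : Type} [Fintype V] [Nonempty V]
    (l : List (V → Bool)) (X : Set (V → Bool)) :
    PTSat X (PTtensorList (l.map (fun s => .and (PTdescr s) .ne))) ↔
      X = {s | s ∈ l} := by
  induction l generalizing X with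
  | nil =>
    show X = ∅ ↔ _
    simp
  | cons a l ih =>
    show (∃ Y Z, X = Y ∪ Z ∧ PTSat Y (.and (PTdescr a) .ne) ∧
        PTSat Z (PTtensorList (l.map (fun s => .and (PTdescr s) .ne)))) ↔ _
    constructor
    · rintro ⟨Y, Z, rfl, ⟨hYd, hYne⟩, hZ⟩
      have hY : Y = {a} := by
        apply Set.eq_singleton_iff_nonempty_unique_mem.mpr
        exact ⟨Set.nonempty_iff_ne_empty.mpr hYne,
          fun t ht => (sat_PTdescr Y a).mp hYd t ht⟩
      rw [hY, ih Z |>.mp hZ]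
      ext t
      simp [Set.mem_insert_iff]
    · rintro rfl
      refine ⟨{a}, {s | s ∈ l}, ?_, ⟨?_, ?_⟩, (ih _).mpr rfl⟩
      · ext t; simp
      · exact (sat_PTdescr _ a).mpr (by rintro t rfl; rfl)
      · exact Set.singleton_ne_empty a
    
lemma sat_thetaStar {V : Type} [Fintype V] [Nonempty V]
    (Y : Finset (V → Bool)) (X : Set (V → Bool)) :
    PTSat X (PTthetaStar Y) ↔ X = ↑Y := by
  rw [PTthetaStar, sat_thetaStarList]
  have : {s | s ∈ Y.toList} = (↑Y : Set (V → Bool)) := by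
    ext t; simp [Finset.mem_toList]
  rw [this]

lemma sat_borList {V : Type} (l : List (PTForm V)) (X : Set (V → Bool)) :
    PTSat X (PTborList l) ↔ ∃ ψ ∈ l, PTSat X ψ := by
  induction l with
  | nil =>
    show X = ∅ ∧ X ≠ ∅ ↔ _
    simp
  | cons a l ih =>
    show PTSat X a ∨ PTSat X (PTborList l) ↔ _
    rw [ih]
    simp

/-- **Normal form for PT⁺.**  Every PT⁺ formula over a finite (nonempty)
index set is semantically equivalent to a Boolean disjunction
`⋁_{f∈F} Θ*_{X_f}` over a finite (possibly empty) family of teams, where the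
empty Boolean disjunction is `⊥ ∧ NE`. -/
theorem ptplus_normal_form (V : Type) [Fintype V] [Nonempty V]
    (φ : PTForm V) (hφ : IsPTPlus φ) :
    ∃ Fam : Finset (Finset (V → Bool)),
      ∀ X : Set (V → Bool),
        PTSat X φ ↔ PTSat X (PTborList (Fam.toList.map PTthetaStar)) := by
  classical
  refine ⟨(Finset.univ : Finset (Finset (V → Bool))).filter
    (fun Y => PTSat (↑Y : Set (V → Bool)) φ), fun X => ?_⟩
  rw [sat_borList]
  constructor
  · intro h
    refine ⟨PTthetaStar (Set.toFinite X).toFinset,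
      List.mem_map.mpr ⟨(Set.toFinite X).toFinset, ?_, rfl⟩, ?_⟩
    · rw [Finset.mem_toList, Finset.mem_filter]
      exact ⟨Finset.mem_univ _, by rwa [Set.Finite.coe_toFinset]⟩
    · rw [sat_thetaStar, Set.Finite.coe_toFinset]
  · rintro ⟨ψ, hψ, hX⟩
    obtain ⟨Y, hY, rfl⟩ := List.mem_map.mp hψ
    rw [Finset.mem_toList, Finset.mem_filter] at hY
    rw [(sat_thetaStar Y X).mp hX]
    exact hY.2
end

section
/- Soundness of the weak tensor elimination rule: let φ, ψ be formulas of full propositional team logic (FPT), let α be a classical formula, and let Π₀, Π₁, Π₂ be sets of FPT formulas such that Π₁ and Π₂ consist of classical formulas only. If Π₀ ⊨ φ⊗ψ, Π₁ ∪ {φ} ⊨ α, and Π₂ ∪ {ψ} ⊨ α, then Π₀ ∪ Π₁ ∪ Π₂ ⊨ α. -/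
lemma classical_empty {V : Type} {χ : PTForm V} (h : IsClassical χ) :
    PTSat (∅ : Set (V → Bool)) χ := by
  induction h with
  | pos i => intro s hs; exact absurd hs (Set.notMem_empty s)
  | neg i => intro s hs; exact absurd hs (Set.notMem_empty s)
  | bot => rfl
  | and _ _ ih1 ih2 => exact ⟨ih1, ih2⟩
  | tensor _ _ ih1 ih2 => exact ⟨∅, ∅, by simp, ih1, ih2⟩

lemma classical_flat {V : Type} {χ : PTForm V} (h : IsClassical χ) (X : Set (V → Bool)) :
    PTSat X χ ↔ ∀ s ∈ X, PTSat ({s} : Set (V → Bool)) χ := by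
  induction h generalizing X with
  | pos i => simp [PTSat]
  | neg i => simp [PTSat]
  | bot =>
      simp only [PTSat]
      constructor
      · rintro rfl; simp
      · intro h
        ext s; simp only [Set.mem_empty_iff_false, iff_false]
        intro hs
        exact Set.singleton_ne_empty s (h s hs)
  | and h1 h2 ih1 ih2 =>
      simp only [PTSat]; rw [ih1, ih2]
      constructor
      · rintro ⟨a, b⟩ s hs; exact ⟨a s hs, b s hs⟩
      · intro h; exact ⟨fun s hs => (h s hs).1, fun s hs => (h s hs).2⟩
  | @tensor φ' ψ' h1 h2 ih1 ih2 =>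
      constructor
      · rintro ⟨Y, Z, rfl, hY, hZ⟩ s hs
        cases hs with
        | inl hs =>
            exact ⟨{s}, ∅, by simp, (ih1 Y).mp hY s hs, classical_empty h2⟩
        | inr hs =>
            exact ⟨∅, {s}, by simp, classical_empty h1, (ih2 Z).mp hZ s hs⟩
      · intro h
        refine ⟨{s ∈ X | PTSat {s} φ'}, {s ∈ X | PTSat {s} ψ'}, ?_, ?_, ?_⟩
        · ext s
          simp only [Set.mem_union, Set.mem_setOf_eq]
          constructor
          · intro hs
            obtain ⟨Y', Z', heq, hY', hZ'⟩ := h s hs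
            have : s ∈ Y' ∪ Z' := heq ▸ rfl
            cases this with
            | inl hm => exact Or.inl ⟨hs, (ih1 Y').mp hY' s hm⟩
            | inr hm => exact Or.inr ⟨hs, (ih2 Z').mp hZ' s hm⟩
          · rintro (⟨hs, _⟩ | ⟨hs, _⟩) <;> exact hs
        · exact (ih1 _).mpr (fun s hs => hs.2)
        · exact (ih2 _).mpr (fun s hs => hs.2)

/-- **Soundness of the weak tensor elimination rule.**  If `α` is classical,
`Γ₁` and `Γ₂` consist of classical formulas only, `Γ₀ ⊨ φ ⊗ ψ`,
`Γ₁ ∪ {φ} ⊨ α` and `Γ₂ ∪ {ψ} ⊨ α`, then `Γ₀ ∪ Γ₁ ∪ Γ₂ ⊨ α`. -/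
theorem tensor_weak_elimination_sound (φ ψ α : PTForm ℕ) (hα : IsClassical α)
    (Γ₀ Γ₁ Γ₂ : Set (PTForm ℕ))
    (hΓ₁ : ∀ χ ∈ Γ₁, IsClassical χ) (hΓ₂ : ∀ χ ∈ Γ₂, IsClassical χ)
    (e₀ : PTEntails Γ₀ (.tensor φ ψ))
    (e₁ : PTEntails (Γ₁ ∪ {φ}) α) (e₂ : PTEntails (Γ₂ ∪ {ψ}) α) :
    PTEntails (Γ₀ ∪ Γ₁ ∪ Γ₂) α := by
  intro X hX
  have hΓ₀sat : ∀ χ ∈ Γ₀, PTSat X χ := fun χ hχ => hX χ (Or.inl (Or.inl hχ))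
  obtain ⟨Y, Z, rfl, hY, hZ⟩ := e₀ X hΓ₀sat
  have hYα : PTSat Y α := by
    apply e₁ Y
    intro χ hχ
    cases hχ with
    | inl hχ =>
        apply (classical_flat (hΓ₁ χ hχ) Y).mpr
        intro s hs
        exact (classical_flat (hΓ₁ χ hχ) (Y ∪ Z)).mp
          (hX χ (Or.inl (Or.inr hχ))) s (Or.inl hs)
    | inr hχ => cases hχ; exact hY
  have hZα : PTSat Z α := by
    apply e₂ Z
    intro χ hχ
    cases hχ with
    | inl hχ =>
        apply (classical_flat (hΓ₂ χ hχ) Z).mpr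
        intro s hs
        exact (classical_flat (hΓ₂ χ hχ) (Y ∪ Z)).mp
          (hX χ (Or.inr hχ)) s (Or.inr hs)
    | inr hχ => cases hχ; exact hZ
  apply (classical_flat hα (Y ∪ Z)).mpr
  intro s hs
  cases hs with
  | inl hs => exact (classical_flat hα Y).mp hYα s hs
  | inr hs => exact (classical_flat hα Z).mp hZα s hs
end

section
/- Soundness of the Geiger–Paz–Pearl exchange axiom for propositional independence atoms: let x⃗ = (i₁,…,i_k), y⃗ = (j₁,…,j_m), z⃗ = (l₁,…,l_n) be finite sequences of indices. For every team X: if X ⊨ x⃗ ⊥ y⃗ and X ⊨ x⃗y⃗ ⊥ z⃗, then X ⊨ x⃗ ⊥ y⃗z⃗ (where x⃗y⃗ and y⃗z⃗ denote concatenation of sequences). -/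
/-- **Soundness of the Geiger–Paz–Pearl exchange axiom.**  For sequences of
indices `x⃗`, `y⃗`, `z⃗` and any team `X`: if `X ⊨ x⃗ ⊥ y⃗` and
`X ⊨ x⃗y⃗ ⊥ z⃗`, then `X ⊨ x⃗ ⊥ y⃗z⃗`. -/
theorem gpp_exchange (xs ys zs : List ℕ) (X : Set (ℕ → Bool))
    (h₁ : PTSat X (.indep xs ys)) (h₂ : PTSat X (.indep (xs ++ ys) zs)) :
    PTSat X (.indep xs (ys ++ zs)) := by
  intro s hs s' hs'
  obtain ⟨t, ht, htx, hty⟩ := h₁ s hs s' hs'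
  obtain ⟨u, hu, huxy, huz⟩ := h₂ t ht s' hs'
  refine ⟨u, hu, ?_, ?_⟩
  · intro i hi
    rw [huxy i (List.mem_append_left _ hi), htx i hi]
  · intro j hj
    rcases List.mem_append.mp hj with h | h
    · rw [huxy j (List.mem_append_right _ h), hty j h]
    · exact huz j h
end
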